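/- arXiv:2305.13865 — 3 statements merged into one kernel-verified Lean document; each statement's English description precedes it below -/
import Mathlib

section
/- The Gaussian mechanism M(D) = f(D) + N(0, σ²), where f has ℓ₂-sensitivity Δ (i.e., |f(D) − f(D')| ≤ Δ for neighboring datasets) and σ ≥ Δ · sqrt(2 log(1.25/δ)) / ε with ε ∈ (0,1), is (ε, δ)-differentially private. -/
/-!
Write `μ = f d`, `μ' = f d'`, `c = μ - μ'`, `v = σ²` and `a = √(2 log (1.25 / δ))`, so that
`δ = 1.25 e^{-a²/2}`. Off the privacy-loss event `B = {x | log (p_μ x / p_μ' x) > ε}` the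
densities satisfy `p_μ ≤ e^ε p_μ'`, hence `P_μ s ≤ e^ε P_μ' s + P_μ B`. The privacy loss
`((x - μ')² - (x - μ)²) / (2v)` is affine in `x`, so `P_μ B` is a standard normal tail
`P (Z > s₀)` with `s₀ = εσ/|c| - |c|/(2σ) ≥ a - 1/(2a)`, using `|c| a ≤ εσ ≤ σ`.
Comparing the density on `(s₀, ∞)` with the one recentred at `s₀` gives
`P (Z > s₀) ≤ e^{-s₀²/2} / 2 ≤ e^{1/2} e^{-a²/2} / 2 ≤ δ`. When `a² < 1/2` the point `s₀` may
be slightly negative, but then `δ ≥ 15/16` and `P (Z > s₀) ≤ 1/2 + |s₀| / √(2π)` suffices.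
-/

open MeasureTheory ProbabilityTheory

def DP {D Ω : Type*} [MeasurableSpace Ω] (neighbor : D → D → Prop)
    (A : D → Measure Ω) (ε δ : ℝ) : Prop :=
  ∀ d d', neighbor d d' → ∀ s : Set Ω, MeasurableSet s →
    A d s ≤ ENNReal.ofReal (Real.exp ε) * A d' s + ENNReal.ofReal δ

open Real NNReal Set

lemma MeasureTheory.measure_le_mul_add_of_le_on_compl {Ω : Type*} [MeasurableSpace Ω]
    {P Q : Measure Ω} {B s : Set Ω} {r δ : ENNReal}
    (hPQ : P (s ∩ Bᶜ) ≤ r * Q (s ∩ Bᶜ)) (hB : P B ≤ δ) : P s ≤ r * Q s + δ :=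
  calc P s ≤ P (s ∩ Bᶜ) + P (s \ Bᶜ) := measure_le_inter_add_sdiff P s Bᶜ
    _ ≤ r * Q s + δ := by
        gcongr
        · exact hPQ.trans (by gcongr; exact inter_subset_left)
        · exact (measure_mono fun x hx ↦ not_not.1 hx.2).trans hB

namespace ProbabilityTheory

lemma gaussianReal_Ioi_self (μ : ℝ) {v : ℝ≥0} (hv : v ≠ 0) :
    gaussianReal μ v (Ioi μ) = ENNReal.ofReal (1 / 2) := by
  have h0 : gaussianReal 0 v (Ioi 0) = ENNReal.ofReal (1 / 2) := by
    rw [gaussianReal_apply_eq_integral 0 hv]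
    congr 1
    have hpdf : gaussianPDFReal 0 v
        = fun x ↦ (√(2 * π * v))⁻¹ * exp (-(2 * (v : ℝ))⁻¹ * x ^ 2) := by
      ext x
      simp only [gaussianPDFReal, sub_zero]
      ring_nf
    rw [hpdf, integral_const_mul, integral_gaussian_Ioi, div_inv_eq_mul, mul_comm π]
    field_simp
  rw [← zero_add μ, ← gaussianReal_map_add_const,
    Measure.map_apply (measurable_add_const μ) measurableSet_Ioi, ← h0]
  congr 1
  ext x
  simp

lemma gaussianPDFReal_le (μ : ℝ) (v : ℝ≥0) (x : ℝ) :
    gaussianPDFReal μ v x ≤ (√(2 * π * v))⁻¹ := by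
  rw [gaussianPDFReal]
  refine mul_le_of_le_one_right (by positivity) (exp_le_one_iff.2 ?_)
  have : 0 ≤ (x - μ) ^ 2 / (2 * v) := by positivity
  rw [neg_div]
  linarith

lemma gaussianReal_Ioi_le_exp {s : ℝ} (hs : 0 ≤ s) :
    gaussianReal 0 1 (Ioi s) ≤ ENNReal.ofReal (exp (-s ^ 2 / 2) / 2) := by
  have hpdf : ∀ x ∈ Ioi s,
      gaussianPDF 0 1 x ≤ ENNReal.ofReal (exp (-s ^ 2 / 2)) * gaussianPDF s 1 x := by
    intro x hx
    rw [gaussianPDF, gaussianPDF, ← ENNReal.ofReal_mul (exp_nonneg _)]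
    refine ENNReal.ofReal_le_ofReal ?_
    simp only [gaussianPDFReal, NNReal.coe_one, mul_one, sub_zero]
    rw [mul_left_comm, ← exp_add]
    gcongr
    nlinarith [mul_nonneg hs (sub_nonneg.2 (le_of_lt hx))]
  calc gaussianReal 0 1 (Ioi s)
      ≤ ∫⁻ x in Ioi s, ENNReal.ofReal (exp (-s ^ 2 / 2)) * gaussianPDF s 1 x := by
        rw [gaussianReal_apply 0 one_ne_zero]
        exact setLIntegral_mono ((measurable_gaussianPDF s 1).const_mul _) hpdf
    _ = ENNReal.ofReal (exp (-s ^ 2 / 2)) * gaussianReal s 1 (Ioi s) := by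
        rw [lintegral_const_mul _ (measurable_gaussianPDF s 1), gaussianReal_apply s one_ne_zero]
    _ = ENNReal.ofReal (exp (-s ^ 2 / 2) / 2) := by
        rw [gaussianReal_Ioi_self s one_ne_zero, ← ENNReal.ofReal_mul (exp_nonneg _)]
        ring_nf

lemma gaussianReal_Ioi_le_of_nonpos {s : ℝ} (hs : s ≤ 0) :
    gaussianReal 0 1 (Ioi s) ≤ ENNReal.ofReal (1 / 2 + -s / √(2 * π)) := by
  have hIoc : gaussianReal 0 1 (Ioc s 0) ≤ ENNReal.ofReal (-s / √(2 * π)) :=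
    calc gaussianReal 0 1 (Ioc s 0)
        ≤ ∫⁻ _ in Ioc s 0, ENNReal.ofReal (√(2 * π))⁻¹ := by
          rw [gaussianReal_apply 0 one_ne_zero]
          refine setLIntegral_mono measurable_const fun x _ ↦ ENNReal.ofReal_le_ofReal ?_
          simpa using gaussianPDFReal_le 0 1 x
      _ = ENNReal.ofReal (-s / √(2 * π)) := by
          rw [setLIntegral_const, volume_Ioc, ← ENNReal.ofReal_mul (by positivity)]
          ring_nf
  calc gaussianReal 0 1 (Ioi s)
      ≤ gaussianReal 0 1 (Ioc s 0) + gaussianReal 0 1 (Ioi 0) := by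
        rw [← Ioc_union_Ioi_eq_Ioi hs]
        exact measure_union_le _ _
    _ ≤ ENNReal.ofReal (-s / √(2 * π)) + ENNReal.ofReal (1 / 2) :=
        add_le_add hIoc (gaussianReal_Ioi_self 0 one_ne_zero).le
    _ = ENNReal.ofReal (1 / 2 + -s / √(2 * π)) := by
        have : 0 ≤ -s / √(2 * π) := div_nonneg (neg_nonneg.2 hs) (sqrt_nonneg _)
        rw [add_comm, ENNReal.ofReal_add (by norm_num) this]

lemma gaussianReal_setOf_lt_mul_sub (μ : ℝ) {v : ℝ≥0} (hv : v ≠ 0) {c : ℝ} (hc : c ≠ 0)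
    (t : ℝ) :
    gaussianReal μ v {x | t < c * (x - μ)} = gaussianReal 0 1 (Ioi (t / (|c| * √v))) := by
  have hr : 0 < |c| * √v := by positivity
  set k := c / (|c| * √v)
  have hstd : (gaussianReal μ v).map (fun x ↦ k * (x - μ)) = gaussianReal 0 1 := by
    change (gaussianReal μ v).map ((k * ·) ∘ (· - μ)) = _
    rw [← Measure.map_map (measurable_const_mul k) (measurable_sub_const μ),
      gaussianReal_map_sub_const, gaussianReal_map_const_mul, sub_self, mul_zero]
    congr 1
    ext
    simp only [NNReal.coe_mul, NNReal.coe_mk, NNReal.coe_one, k, div_pow, mul_pow, sq_abs,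
      sq_sqrt v.coe_nonneg]
    field_simp
  have hset : {x | t < c * (x - μ)} = (fun x ↦ k * (x - μ)) ⁻¹' Ioi (t / (|c| * √v)) := by
    ext x
    simp only [mem_ofPred_eq, mem_preimage, mem_Ioi, k, div_mul_eq_mul_div,
      div_lt_div_iff_of_pos_right hr]
  rw [hset, ← Measure.map_apply (by fun_prop) measurableSet_Ioi, hstd]

lemma gaussianReal_Ioi_le_of_sub_inv_le {a s : ℝ} (ha : 0 < a)
    (hδ : 5 / 4 * exp (-a ^ 2 / 2) < 1) (hs : a - (2 * a)⁻¹ ≤ s) :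
    gaussianReal 0 1 (Ioi s) ≤ ENNReal.ofReal (5 / 4 * exp (-a ^ 2 / 2)) := by
  rcases le_or_gt (1 / 2) (a ^ 2) with ha2 | ha2
  · have hinv : (2 * a)⁻¹ * (2 * a) = 1 := inv_mul_cancel₀ (by positivity)
    have hlow : 0 ≤ a - (2 * a)⁻¹ := by nlinarith
    have hs0 : 0 ≤ s := hlow.trans hs
    have hs2 : a ^ 2 - 1 ≤ s ^ 2 :=
      calc a ^ 2 - 1 ≤ (a - (2 * a)⁻¹) ^ 2 := by nlinarith [sq_nonneg (2 * a)⁻¹]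
        _ ≤ s ^ 2 := pow_le_pow_left₀ hlow hs 2
    have hexp : exp (1 / 2) ≤ 2 :=
      (exp_bound_div_one_sub_of_interval (by norm_num) (by norm_num)).trans_eq (by norm_num)
    refine (gaussianReal_Ioi_le_exp hs0).trans (ENNReal.ofReal_le_ofReal ?_)
    calc exp (-s ^ 2 / 2) / 2
        ≤ exp (1 / 2) * exp (-a ^ 2 / 2) / 2 := by
          rw [← exp_add]
          gcongr
          linarith
      _ ≤ 5 / 4 * exp (-a ^ 2 / 2) := by nlinarith [exp_pos (-a ^ 2 / 2)]
  · have hδ_ge : 15 / 16 ≤ 5 / 4 * exp (-a ^ 2 / 2) := by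
      nlinarith [add_one_le_exp (-a ^ 2 / 2)]
    have ha_ge : 5 / 8 ≤ a := by
      nlinarith [add_one_le_exp (-a ^ 2 / 2)]
    have hs' : -min s 0 ≤ 4 / 5 := by
      have : (2 * a)⁻¹ ≤ 4 / 5 := by
        rw [inv_le_comm₀ (by positivity) (by norm_num)]
        linarith
      have : -(4 / 5) ≤ min s 0 := le_min (by linarith) (by norm_num)
      linarith
    have hsqrt : 2 ≤ √(2 * π) := le_sqrt_of_sq_le (by nlinarith [two_le_pi])
    calc gaussianReal 0 1 (Ioi s)
        ≤ gaussianReal 0 1 (Ioi (min s 0)) := measure_mono (Ioi_subset_Ioi (min_le_left s 0))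
      _ ≤ ENNReal.ofReal (1 / 2 + -min s 0 / √(2 * π)) :=
          gaussianReal_Ioi_le_of_nonpos (min_le_right s 0)
      _ ≤ ENNReal.ofReal (5 / 4 * exp (-a ^ 2 / 2)) := by
          refine ENNReal.ofReal_le_ofReal ?_
          linarith [div_le_div₀ (by norm_num) hs' two_pos hsqrt]

lemma gaussianPDFReal_le_exp_mul {μ μ' ε x : ℝ} {v : ℝ≥0}
    (h : (x - μ') ^ 2 - (x - μ) ^ 2 ≤ 2 * ε * v) :
    gaussianPDFReal μ v x ≤ exp ε * gaussianPDFReal μ' v x := by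
  rcases eq_or_ne v 0 with rfl | hv
  · simp
  have hv' : (0 : ℝ) < v := by positivity
  rw [gaussianPDFReal, gaussianPDFReal, mul_left_comm, ← exp_add]
  gcongr
  have key : ε + -(x - μ') ^ 2 / (2 * v) - -(x - μ) ^ 2 / (2 * v)
      = (2 * ε * v - ((x - μ') ^ 2 - (x - μ) ^ 2)) / (2 * v) := by
    field_simp
    ring
  linarith [div_nonneg (sub_nonneg.2 h) (by positivity : (0 : ℝ) ≤ 2 * v)]

lemma gaussianReal_le_exp_mul_of_forall {μ μ' ε : ℝ} {v : ℝ≥0} (hv : v ≠ 0) {t : Set ℝ}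
    (h : ∀ x ∈ t, (x - μ') ^ 2 - (x - μ) ^ 2 ≤ 2 * ε * v) :
    gaussianReal μ v t ≤ ENNReal.ofReal (exp ε) * gaussianReal μ' v t := by
  rw [gaussianReal_apply _ hv, gaussianReal_apply _ hv,
    ← lintegral_const_mul _ (measurable_gaussianPDF _ _)]
  refine setLIntegral_mono ((measurable_gaussianPDF _ _).const_mul _) fun x hx ↦ ?_
  rw [gaussianPDF, gaussianPDF, ← ENNReal.ofReal_mul (exp_nonneg ε)]
  exact ENNReal.ofReal_le_ofReal (gaussianPDFReal_le_exp_mul (h x hx))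

/-- `{x | 2 ε v < (x - μ')² - (x - μ)²}` is the event that the privacy loss
`log (gaussianPDFReal μ v x / gaussianPDFReal μ' v x)` exceeds `ε`. -/
lemma gaussianReal_privacyLoss_gt_le {μ μ' ε a : ℝ} {v : ℝ≥0} (hv : v ≠ 0) (hμ : μ ≠ μ')
    (hε : ε ≤ 1) (ha : 0 < a) (hδ : 5 / 4 * exp (-a ^ 2 / 2) < 1)
    (h : |μ - μ'| * a ≤ ε * √v) :
    gaussianReal μ v {x | 2 * ε * v < (x - μ') ^ 2 - (x - μ) ^ 2}
      ≤ ENNReal.ofReal (5 / 4 * exp (-a ^ 2 / 2)) := by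
  set c := μ - μ'
  have hc : c ≠ 0 := sub_ne_zero.2 hμ
  have hset : {x | 2 * ε * v < (x - μ') ^ 2 - (x - μ) ^ 2}
      = {x | ε * v - c ^ 2 / 2 < c * (x - μ)} := by
    ext x
    simp only [mem_ofPred_eq, c]
    constructor <;> intro <;> nlinarith
  rw [hset, gaussianReal_setOf_lt_mul_sub μ hv hc]
  refine gaussianReal_Ioi_le_of_sub_inv_le ha hδ ?_
  set r := √(v : ℝ)
  have hr : 0 < r := by positivity
  have hc' : 0 < |c| := abs_pos.2 hc
  have hvr : (v : ℝ) = r ^ 2 := (sq_sqrt v.coe_nonneg).symm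
  have h1 : a ≤ ε * r / |c| := by
    rw [le_div_iff₀ hc']
    linarith
  have h2 : |c| / (2 * r) ≤ (2 * a)⁻¹ := by
    rw [inv_eq_one_div, div_le_div_iff₀ (by positivity) (by positivity)]
    nlinarith
  have h3 : (ε * v - c ^ 2 / 2) / (|c| * r) = ε * r / |c| - |c| / (2 * r) := by
    rw [hvr, ← sq_abs c]
    field_simp
  linarith

theorem gaussianReal_le_exp_mul_add {μ μ' ε a : ℝ} {v : ℝ≥0} (hε : 0 ≤ ε) (hε1 : ε ≤ 1)
    (ha : 0 < a) (hδ : 5 / 4 * exp (-a ^ 2 / 2) < 1) (h : |μ - μ'| * a ≤ ε * √v)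
    (s : Set ℝ) :
    gaussianReal μ v s
      ≤ ENNReal.ofReal (exp ε) * gaussianReal μ' v s
        + ENNReal.ofReal (5 / 4 * exp (-a ^ 2 / 2)) := by
  rcases eq_or_ne μ μ' with rfl | hμ
  · exact le_add_right (le_mul_of_one_le_left' (ENNReal.one_le_ofReal.2 (one_le_exp hε)))
  have hv : v ≠ 0 := by
    rintro rfl
    have : 0 < |μ - μ'| * a := mul_pos (abs_pos.2 (sub_ne_zero.2 hμ)) ha
    rw [NNReal.coe_zero, Real.sqrt_zero, mul_zero] at h
    linarith
  refine measure_le_mul_add_of_le_on_compl (B := {x | 2 * ε * v < (x - μ') ^ 2 - (x - μ) ^ 2})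
    (gaussianReal_le_exp_mul_of_forall hv fun x hx ↦ not_lt.1 hx.2)
    (gaussianReal_privacyLoss_gt_le hv hμ hε1 ha hδ h)

end ProbabilityTheory

theorem gaussian_mechanism_is_DP_general {D : Type*} (neighbor : D → D → Prop)
    (f : D → ℝ) (Δ ε δ σ : ℝ)
    (hε : ε ∈ Set.Ioo (0 : ℝ) 1) (hδ : δ ∈ Set.Ioo (0 : ℝ) 1)
    (hσ : σ ≥ Δ * Real.sqrt (2 * Real.log (1.25 / δ)) / ε)
    (hsens : ∀ d d', neighbor d d' → |f d - f d'| ≤ Δ) :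
    DP neighbor (fun d => gaussianReal (f d) ((σ ^ 2).toNNReal)) ε δ := by
  obtain ⟨hε0, hε1⟩ := hε
  obtain ⟨hδ0, hδ1⟩ := hδ
  set a := √(2 * log (1.25 / δ))
  have hlog : 0 < log (1.25 / δ) := log_pos ((one_lt_div hδ0).2 (by linarith))
  have ha : 0 < a := sqrt_pos.2 (by positivity)
  have hδa : 5 / 4 * exp (-a ^ 2 / 2) = δ := by
    rw [sq_sqrt (by positivity), neg_div, mul_div_cancel_left₀ _ two_ne_zero, exp_neg,
      exp_log (by positivity)]
    field_simp
    norm_num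
  intro d d' hn s _
  rw [← hδa]
  refine gaussianReal_le_exp_mul_add hε0.le hε1.le ha (hδa.trans_lt hδ1) ?_ s
  calc |f d - f d'| * a ≤ Δ * a := by gcongr; exact hsens d d' hn
    _ ≤ ε * σ := by
        rw [ge_iff_le, div_le_iff₀ hε0] at hσ
        linarith
    _ ≤ ε * √((σ ^ 2).toNNReal) := by
        rw [Real.coe_toNNReal _ (sq_nonneg σ), sqrt_sq_eq_abs]
        gcongr
        exact le_abs_self σ

/-- The Gaussian mechanism `M(D) = f(D) + N(0, σ²)`, where `f` has
ℓ₂-sensitivity `Δ` and `σ ≥ Δ √(2 log(1.25/δ)) / ε` with `ε ∈ (0,1)`,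
is `(ε, δ)`-differentially private. -/
theorem gaussian_mechanism_is_DP {D : Type*} (neighbor : D → D → Prop)
    (f : D → ℝ) (Δ ε δ σ : ℝ)
    (hΔ : 0 < Δ) (hε : ε ∈ Set.Ioo (0 : ℝ) 1) (hδ : δ ∈ Set.Ioo (0 : ℝ) 1)
    (hσ : σ ≥ Δ * Real.sqrt (2 * Real.log (1.25 / δ)) / ε)
    (hsens : ∀ d d', neighbor d d' → |f d - f d'| ≤ Δ) :
    DP neighbor (fun d => gaussianReal (f d) ((σ ^ 2).toNNReal)) ε δ :=
  gaussian_mechanism_is_DP_general neighbor f Δ ε δ σ hε hδ hσ hsens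
end

section
/- For any (ε, δ)-DP mechanism A with finite output space and any neighboring datasets D, D', there exist distributions P', Q' with total variation distance at most δ from the laws of A(D), A(D') respectively, such that P'(S) ≤ e^ε Q'(S) and Q'(S) ≤ e^ε P'(S) for all S. -/
open MeasureTheory Finset
open scoped Classical

section aux

variable {Ω : Type*} [Fintype Ω]

private lemma core_case (k : ℝ) (hk : 1 ≤ k) (p1 q1 : Ω → ℝ) (α β : ℝ)
    (hβ0 : 0 ≤ β)
    (hpq : ∀ x, p1 x ≤ k * q1 x) (hqp : ∀ x, q1 x ≤ k * p1 x)
    (hsp : ∑ x, p1 x = 1 - α) (hsq : ∑ x, q1 x = 1 - β)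
    (hcase : k * β < α) :
    ∃ r : Ω → ℝ, (∀ x, 0 ≤ r x) ∧ ∑ x, r x = 1 ∧
      (∀ x, p1 x + α * r x ≤ k * (q1 x + β * r x)) ∧
      (∀ x, q1 x + β * r x ≤ k * (p1 x + α * r x)) := by
  have hM0 : (0:ℝ) < k - 1 + α - k * β := by nlinarith
  set M : ℝ := k - 1 + α - k * β with hMdef
  have hsum : ∑ x, (k * q1 x - p1 x) = M := by
    rw [Finset.sum_sub_distrib, ← Finset.mul_sum, hsp, hsq]; ring
  refine ⟨fun x => (k * q1 x - p1 x) / M,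
    fun x => div_nonneg (by linarith [hpq x]) hM0.le, ?_, ?_, ?_⟩
  · rw [← Finset.sum_div, hsum, div_self hM0.ne']
  · intro x
    have h1 : 0 ≤ k * q1 x - p1 x := by linarith [hpq x]
    have h2 : (k * q1 x - p1 x) / M * M = k * q1 x - p1 x := div_mul_cancel₀ _ hM0.ne'
    have h3 : 0 ≤ (k * q1 x - p1 x) / M := div_nonneg h1 hM0.le
    have h4 : α - k * β ≤ M := by rw [hMdef]; linarith
    nlinarith [mul_le_mul_of_nonneg_left h4 h3]
  · intro x
    have h3 : 0 ≤ (k * q1 x - p1 x) / M := div_nonneg (by linarith [hpq x]) hM0.le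
    have hα0 : (0:ℝ) < α := lt_of_le_of_lt (mul_nonneg (by linarith) hβ0) hcase
    have hb1 : β ≤ k * β := le_mul_of_one_le_left hβ0 hk
    have hb2 : α ≤ k * α := le_mul_of_one_le_left hα0.le hk
    have hβk : β ≤ k * α := by linarith
    nlinarith [hqp x, mul_le_mul_of_nonneg_left hβk h3]

private lemma exists_r (k : ℝ) (hk : 1 ≤ k) (p1 q1 r0 : Ω → ℝ) (α β : ℝ)
    (hα0 : 0 ≤ α) (hβ0 : 0 ≤ β)
    (hr0 : ∀ x, 0 ≤ r0 x) (hr0s : ∑ x, r0 x = 1)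
    (hpq : ∀ x, p1 x ≤ k * q1 x) (hqp : ∀ x, q1 x ≤ k * p1 x)
    (hsp : ∑ x, p1 x = 1 - α) (hsq : ∑ x, q1 x = 1 - β) :
    ∃ r : Ω → ℝ, (∀ x, 0 ≤ r x) ∧ ∑ x, r x = 1 ∧
      (∀ x, p1 x + α * r x ≤ k * (q1 x + β * r x)) ∧
      (∀ x, q1 x + β * r x ≤ k * (p1 x + α * r x)) := by
  rcases lt_or_ge (k * β) α with h | h
  · exact core_case k hk p1 q1 α β hβ0 hpq hqp hsp hsq h
  rcases lt_or_ge (k * α) β with h' | h'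
  · obtain ⟨r, h1, h2, h3, h4⟩ := core_case k hk q1 p1 β α hα0 hqp hpq hsq hsp h'
    exact ⟨r, h1, h2, h4, h3⟩
  · refine ⟨r0, hr0, hr0s, fun x => ?_, fun x => ?_⟩
    · have := mul_le_mul_of_nonneg_right h (hr0 x)
      nlinarith [hpq x]
    · have := mul_le_mul_of_nonneg_right h' (hr0 x)
      nlinarith [hqp x]

private lemma core (k δ : ℝ) (hk : 1 ≤ k) (p q : Ω → ℝ)
    (hp0 : ∀ x, 0 ≤ p x) (hq0 : ∀ x, 0 ≤ q x)
    (hps : ∑ x, p x = 1) (hqs : ∑ x, q x = 1)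
    (hα : ∑ x, (p x - min (p x) (k * q x)) ≤ δ)
    (hβ : ∑ x, (q x - min (q x) (k * p x)) ≤ δ) :
    ∃ p' q' : Ω → ℝ, (∀ x, 0 ≤ p' x) ∧ (∀ x, 0 ≤ q' x) ∧
      ∑ x, p' x = 1 ∧ ∑ x, q' x = 1 ∧
      (∀ x, p' x ≤ k * q' x) ∧ (∀ x, q' x ≤ k * p' x) ∧
      (∀ s : Finset Ω, ∑ x ∈ s, p' x ≤ ∑ x ∈ s, p x + δ) ∧
      (∀ s : Finset Ω, ∑ x ∈ s, p x ≤ ∑ x ∈ s, p' x + δ) ∧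
      (∀ s : Finset Ω, ∑ x ∈ s, q' x ≤ ∑ x ∈ s, q x + δ) ∧
      (∀ s : Finset Ω, ∑ x ∈ s, q x ≤ ∑ x ∈ s, q' x + δ) := by
  have hk0 : (0:ℝ) ≤ k := by linarith
  set p1 : Ω → ℝ := fun x => min (p x) (k * q x) with hp1def
  set q1 : Ω → ℝ := fun x => min (q x) (k * p x) with hq1def
  set α := ∑ x, (p x - p1 x) with hαdef
  set β := ∑ x, (q x - q1 x) with hβdef
  have hp1le : ∀ x, p1 x ≤ p x := fun x => min_le_left _ _
  have hq1le : ∀ x, q1 x ≤ q x := fun x => min_le_left _ _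
  have hp10 : ∀ x, 0 ≤ p1 x := fun x => le_min (hp0 x) (mul_nonneg hk0 (hq0 x))
  have hq10 : ∀ x, 0 ≤ q1 x := fun x => le_min (hq0 x) (mul_nonneg hk0 (hp0 x))
  have hpq : ∀ x, p1 x ≤ k * q1 x := by
    intro x
    rcases le_total (q x) (k * p x) with h | h
    · rw [show q1 x = q x from min_eq_left h]; exact min_le_right _ _
    · rw [show q1 x = k * p x from min_eq_right h]
      have e1 : 0 ≤ (k - 1) * p x := mul_nonneg (by linarith) (hp0 x)
      have e2 : 0 ≤ (k - 1) * (k * p x) := mul_nonneg (by linarith) (mul_nonneg hk0 (hp0 x))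
      linarith [min_le_left (p x) (k * q x)]
  have hqp : ∀ x, q1 x ≤ k * p1 x := by
    intro x
    rcases le_total (p x) (k * q x) with h | h
    · rw [show p1 x = p x from min_eq_left h]; exact min_le_right _ _
    · rw [show p1 x = k * q x from min_eq_right h]
      have e1 : 0 ≤ (k - 1) * q x := mul_nonneg (by linarith) (hq0 x)
      have e2 : 0 ≤ (k - 1) * (k * q x) := mul_nonneg (by linarith) (mul_nonneg hk0 (hq0 x))
      linarith [min_le_left (q x) (k * p x)]
  have hα0 : 0 ≤ α := Finset.sum_nonneg fun x _ => sub_nonneg.2 (hp1le x)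
  have hβ0 : 0 ≤ β := Finset.sum_nonneg fun x _ => sub_nonneg.2 (hq1le x)
  have hsp : ∑ x, p1 x = 1 - α := by
    have : α = 1 - ∑ x, p1 x := by rw [hαdef, Finset.sum_sub_distrib, hps]
    linarith
  have hsq : ∑ x, q1 x = 1 - β := by
    have : β = 1 - ∑ x, q1 x := by rw [hβdef, Finset.sum_sub_distrib, hqs]
    linarith
  obtain ⟨r, hr0, hrs, hr1, hr2⟩ :=
    exists_r k hk p1 q1 p α β hα0 hβ0 hp0 hps hpq hqp hsp hsq
  have hαδ : α ≤ δ := hα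
  have hβδ : β ≤ δ := hβ
  refine ⟨fun x => p1 x + α * r x, fun x => q1 x + β * r x,
    fun x => add_nonneg (hp10 x) (mul_nonneg hα0 (hr0 x)),
    fun x => add_nonneg (hq10 x) (mul_nonneg hβ0 (hr0 x)), ?_, ?_, hr1, hr2,
    ?_, ?_, ?_, ?_⟩
  · rw [Finset.sum_add_distrib, ← Finset.mul_sum, hsp, hrs]; ring
  · rw [Finset.sum_add_distrib, ← Finset.mul_sum, hsq, hrs]; ring
  · intro s
    have h1 : ∑ x ∈ s, r x ≤ 1 := by
      rw [← hrs]
      exact Finset.sum_le_sum_of_subset_of_nonneg (Finset.subset_univ s)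
        fun x _ _ => hr0 x
    have h2 : ∑ x ∈ s, p1 x ≤ ∑ x ∈ s, p x := Finset.sum_le_sum fun x _ => hp1le x
    have h3 : α * ∑ x ∈ s, r x ≤ α := by nlinarith
    rw [Finset.sum_add_distrib, ← Finset.mul_sum]
    linarith
  · intro s
    have h1 : ∑ x ∈ s, (p x - p1 x) ≤ α := by
      rw [hαdef]
      exact Finset.sum_le_sum_of_subset_of_nonneg (Finset.subset_univ s)
        fun x _ _ => sub_nonneg.2 (hp1le x)
    have h2 : 0 ≤ α * ∑ x ∈ s, r x :=
      mul_nonneg hα0 (Finset.sum_nonneg fun x _ => hr0 x)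
    rw [Finset.sum_add_distrib, ← Finset.mul_sum]
    rw [Finset.sum_sub_distrib] at h1
    linarith
  · intro s
    have h1 : ∑ x ∈ s, r x ≤ 1 := by
      rw [← hrs]
      exact Finset.sum_le_sum_of_subset_of_nonneg (Finset.subset_univ s)
        fun x _ _ => hr0 x
    have h2 : ∑ x ∈ s, q1 x ≤ ∑ x ∈ s, q x := Finset.sum_le_sum fun x _ => hq1le x
    have h3 : β * ∑ x ∈ s, r x ≤ β := by nlinarith
    rw [Finset.sum_add_distrib, ← Finset.mul_sum]
    linarith
  · intro s
    have h1 : ∑ x ∈ s, (q x - q1 x) ≤ β := by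
      rw [hβdef]
      exact Finset.sum_le_sum_of_subset_of_nonneg (Finset.subset_univ s)
        fun x _ _ => sub_nonneg.2 (hq1le x)
    have h2 : 0 ≤ β * ∑ x ∈ s, r x :=
      mul_nonneg hβ0 (Finset.sum_nonneg fun x _ => hr0 x)
    rw [Finset.sum_add_distrib, ← Finset.mul_sum]
    rw [Finset.sum_sub_distrib] at h1
    linarith

end aux

private lemma meas_sum {Ω : Type*} [MeasurableSpace Ω] [Fintype Ω]
    [MeasurableSingletonClass Ω] (μ : Measure Ω) (s : Set Ω) :
    μ s = ∑ x ∈ s.toFinset, μ {x} := by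
  have h : s = ⋃ x ∈ s.toFinset, ({x} : Set Ω) := by ext y; simp
  have hd : (↑s.toFinset : Set Ω).PairwiseDisjoint (fun x => ({x} : Set Ω)) := by
    intro x _ y _ hxy
    simp [Function.onFun, Set.disjoint_singleton, hxy]
  calc μ s = μ (⋃ x ∈ s.toFinset, ({x} : Set Ω)) := by rw [← h]
    _ = ∑ x ∈ s.toFinset, μ {x} :=
        measure_biUnion_finset hd fun b _ => measurableSet_singleton b

private lemma meas_finset {Ω : Type*} [MeasurableSpace Ω] [Fintype Ω]
    [MeasurableSingletonClass Ω] (μ : Measure Ω) [IsFiniteMeasure μ] (s : Finset Ω) :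
    μ ↑s = ENNReal.ofReal (∑ x ∈ s, (μ {x}).toReal) := by
  have h : (↑s : Set Ω) = ⋃ x ∈ s, ({x} : Set Ω) := by ext y; simp
  have hd : (↑s : Set Ω).PairwiseDisjoint (fun x => ({x} : Set Ω)) := by
    intro x _ y _ hxy
    simp [Function.onFun, Set.disjoint_singleton, hxy]
  have h2 : μ ↑s = ∑ x ∈ s, μ {x} := by
    calc μ ↑s = μ (⋃ x ∈ s, ({x} : Set Ω)) := by rw [← h]
      _ = ∑ x ∈ s, μ {x} :=
          measure_biUnion_finset hd fun b _ => measurableSet_singleton b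
  rw [h2, ENNReal.ofReal_sum_of_nonneg fun x _ => ENNReal.toReal_nonneg]
  exact Finset.sum_congr rfl fun x _ => (ENNReal.ofReal_toReal (measure_ne_top μ _)).symm

private noncomputable def mkPMF {Ω : Type*} [Fintype Ω] (f : Ω → ℝ) (h0 : ∀ x, 0 ≤ f x)
    (h1 : ∑ x, f x = 1) : PMF Ω :=
  ⟨fun x => ENNReal.ofReal (f x), by
    have := hasSum_fintype (fun x => ENNReal.ofReal (f x))
    rwa [← ENNReal.ofReal_sum_of_nonneg (fun x _ => h0 x), h1, ENNReal.ofReal_one] at this⟩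

private lemma mkPMF_apply {Ω : Type*} [MeasurableSpace Ω] [Fintype Ω]
    [MeasurableSingletonClass Ω] (f : Ω → ℝ) (h0 : ∀ x, 0 ≤ f x)
    (h1 : ∑ x, f x = 1) (s : Set Ω) :
    (mkPMF f h0 h1).toMeasure s = ENNReal.ofReal (∑ x ∈ s.toFinset, f x) := by
  conv_lhs => rw [← Set.coe_toFinset s]
  rw [PMF.toMeasure_apply_finset,
    ENNReal.ofReal_sum_of_nonneg fun x _ => h0 x]
  rfl

/-- For an `(ε, δ)`-DP mechanism with finite output space (and a symmetric
neighboring relation) and neighboring datasets `D, D'`, there exist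
probability distributions `P', Q'` within total variation distance `δ` of
the laws of `A(D)` and `A(D')` respectively, such that `P'` and `Q'` satisfy
the pure `ε`-DP multiplicative bound in both directions. -/
theorem dp_approximation_by_pure {D Ω : Type*} [MeasurableSpace Ω]
    [Fintype Ω] [MeasurableSingletonClass Ω]
    (neighbor : D → D → Prop) (hsymm : ∀ a b, neighbor a b → neighbor b a)
    (A : D → Measure Ω) (ε δ : ℝ) (hε : 0 ≤ ε) (hδ : 0 ≤ δ)
    (hprob : ∀ d, IsProbabilityMeasure (A d))
    (hA : DP neighbor A ε δ)
    (d d' : D) (hnb : neighbor d d') :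
    ∃ P' Q' : Measure Ω, IsProbabilityMeasure P' ∧ IsProbabilityMeasure Q' ∧
      (∀ s : Set Ω, P' s ≤ A d s + ENNReal.ofReal δ ∧
        A d s ≤ P' s + ENNReal.ofReal δ) ∧
      (∀ s : Set Ω, Q' s ≤ A d' s + ENNReal.ofReal δ ∧
        A d' s ≤ Q' s + ENNReal.ofReal δ) ∧
      (∀ s : Set Ω, P' s ≤ ENNReal.ofReal (Real.exp ε) * Q' s ∧
        Q' s ≤ ENNReal.ofReal (Real.exp ε) * P' s) := by
  classical
  haveI := hprob d; haveI := hprob d'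
  set k := Real.exp ε with hkdef
  have hk : 1 ≤ k := Real.one_le_exp hε
  have hk0 : (0:ℝ) ≤ k := by linarith
  set p : Ω → ℝ := fun x => (A d {x}).toReal with hpdef
  set q : Ω → ℝ := fun x => (A d' {x}).toReal with hqdef
  have hp0 : ∀ x, 0 ≤ p x := fun x => ENNReal.toReal_nonneg
  have hq0 : ∀ x, 0 ≤ q x := fun x => ENNReal.toReal_nonneg
  have hAp : ∀ s : Set Ω, A d s = ENNReal.ofReal (∑ x ∈ s.toFinset, p x) := by
    intro s
    rw [← Set.coe_toFinset s, meas_finset (A d), Set.coe_toFinset]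
  have hAq : ∀ s : Set Ω, A d' s = ENNReal.ofReal (∑ x ∈ s.toFinset, q x) := by
    intro s
    rw [← Set.coe_toFinset s, meas_finset (A d'), Set.coe_toFinset]
  have hps : ∑ x, p x = 1 := by
    have h : A d ↑(Finset.univ : Finset Ω) = 1 := by
      rw [Finset.coe_univ]; exact measure_univ
    rw [meas_finset (A d)] at h
    exact ENNReal.ofReal_eq_one.mp h
  have hqs : ∑ x, q x = 1 := by
    have h : A d' ↑(Finset.univ : Finset Ω) = 1 := by
      rw [Finset.coe_univ]; exact measure_univ
    rw [meas_finset (A d')] at h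
    exact ENNReal.ofReal_eq_one.mp h
  have hDPr : ∀ (a b : D), neighbor a b → ∀ s : Finset Ω,
      ∑ x ∈ s, (A a {x}).toReal ≤ k * ∑ x ∈ s, (A b {x}).toReal + δ := by
    intro a b hn s
    haveI := hprob a; haveI := hprob b
    have h := hA a b hn ↑s (s : Set Ω).toFinite.measurableSet
    rw [meas_finset (A a), meas_finset (A b)] at h
    have hb : 0 ≤ ∑ x ∈ s, (A b {x}).toReal :=
      Finset.sum_nonneg fun x _ => ENNReal.toReal_nonneg
    rw [← hkdef, ← ENNReal.ofReal_mul hk0,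
      ← ENNReal.ofReal_add (mul_nonneg hk0 hb) hδ] at h
    exact (ENNReal.ofReal_le_ofReal_iff (add_nonneg (mul_nonneg hk0 hb) hδ)).mp h
  have hα : ∑ x, (p x - min (p x) (k * q x)) ≤ δ := by
    set S : Finset Ω := Finset.univ.filter (fun x => k * q x < p x) with hS
    have hz : ∀ x ∈ Finset.univ, x ∉ S → (p x - min (p x) (k * q x)) = 0 := by
      intro x _ hx
      have hle : p x ≤ k * q x := by
        by_contra hc
        exact hx (Finset.mem_filter.mpr ⟨Finset.mem_univ x, lt_of_not_ge hc⟩)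
      rw [min_eq_left hle, sub_self]
    have h1 : ∑ x, (p x - min (p x) (k * q x))
        = ∑ x ∈ S, (p x - k * q x) := by
      rw [(Finset.sum_subset (Finset.subset_univ S) hz).symm]
      exact Finset.sum_congr rfl fun x hx => by
        rw [min_eq_right (le_of_lt (Finset.mem_filter.mp hx).2)]
    have h2 := hDPr d d' hnb S
    rw [h1, Finset.sum_sub_distrib, ← Finset.mul_sum]
    exact by linarith [h2]
  have hβ : ∑ x, (q x - min (q x) (k * p x)) ≤ δ := by
    set T : Finset Ω := Finset.univ.filter (fun x => k * p x < q x) with hT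
    have hz : ∀ x ∈ Finset.univ, x ∉ T → (q x - min (q x) (k * p x)) = 0 := by
      intro x _ hx
      have hle : q x ≤ k * p x := by
        by_contra hc
        exact hx (Finset.mem_filter.mpr ⟨Finset.mem_univ x, lt_of_not_ge hc⟩)
      rw [min_eq_left hle, sub_self]
    have h1 : ∑ x, (q x - min (q x) (k * p x))
        = ∑ x ∈ T, (q x - k * p x) := by
      rw [(Finset.sum_subset (Finset.subset_univ T) hz).symm]
      exact Finset.sum_congr rfl fun x hx => by
        rw [min_eq_right (le_of_lt (Finset.mem_filter.mp hx).2)]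
    have h2 := hDPr d' d (hsymm d d' hnb) T
    rw [h1, Finset.sum_sub_distrib, ← Finset.mul_sum]
    exact by linarith [h2]
  obtain ⟨p', q', hp'0, hq'0, hp's, hq's, hm1, hm2, ht1, ht2, ht3, ht4⟩ :=
    core k δ hk p q hp0 hq0 hps hqs hα hβ
  refine ⟨(mkPMF p' hp'0 hp's).toMeasure, (mkPMF q' hq'0 hq's).toMeasure,
    PMF.toMeasure.isProbabilityMeasure _, PMF.toMeasure.isProbabilityMeasure _,
    fun s => ?_, fun s => ?_, fun s => ?_⟩
  · have hb : 0 ≤ ∑ x ∈ s.toFinset, p x := Finset.sum_nonneg fun x _ => hp0 x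
    have hb' : 0 ≤ ∑ x ∈ s.toFinset, p' x := Finset.sum_nonneg fun x _ => hp'0 x
    rw [mkPMF_apply, hAp s, ← ENNReal.ofReal_add hb hδ, ← ENNReal.ofReal_add hb' hδ]
    exact ⟨ENNReal.ofReal_le_ofReal (ht1 s.toFinset),
      ENNReal.ofReal_le_ofReal (ht2 s.toFinset)⟩
  · have hb : 0 ≤ ∑ x ∈ s.toFinset, q x := Finset.sum_nonneg fun x _ => hq0 x
    have hb' : 0 ≤ ∑ x ∈ s.toFinset, q' x := Finset.sum_nonneg fun x _ => hq'0 x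
    rw [mkPMF_apply, hAq s, ← ENNReal.ofReal_add hb hδ, ← ENNReal.ofReal_add hb' hδ]
    exact ⟨ENNReal.ofReal_le_ofReal (ht3 s.toFinset),
      ENNReal.ofReal_le_ofReal (ht4 s.toFinset)⟩
  · have e1 : ∑ x ∈ s.toFinset, p' x ≤ k * ∑ x ∈ s.toFinset, q' x := by
      rw [Finset.mul_sum]
      exact Finset.sum_le_sum fun x _ => hm1 x
    have e2 : ∑ x ∈ s.toFinset, q' x ≤ k * ∑ x ∈ s.toFinset, p' x := by
      rw [Finset.mul_sum]
      exact Finset.sum_le_sum fun x _ => hm2 x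
    rw [mkPMF_apply, mkPMF_apply, ← ENNReal.ofReal_mul hk0,
      ← ENNReal.ofReal_mul hk0]
    exact ⟨ENNReal.ofReal_le_ofReal e1, ENNReal.ofReal_le_ofReal e2⟩
end

section
/- Subsampling amplification (simple form): if A is (ε, 0)-DP and B is the mechanism that, given dataset D, includes each record independently with probability q ∈ (0,1] and runs A on the subsample, then B is (log(1 + q(e^ε − 1)), 0)-DP; in particular log(1 + q(e^ε − 1)) ≤ qε·e^ε and, for ε ≤ 1, log(1 + q(e^ε − 1)) ≤ 2qε. -/
/-!
Conditioning on whether a given record `x` is sampled, the output distribution on `insert x d`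
is the mixture `(1 - q) · μ + q · μ'` of the outputs on subsamples without and with `x`, where
`μ'` is pointwise within a factor `c = e^ε` of `μ`. Such a mixture lies within the factor
`1 + q (c - 1)` of `μ` in both directions; the reverse direction rests on
`(1 + q (c - 1)) (1 + q (c⁻¹ - 1)) ≥ 1`. The numerical bounds follow from `log y ≤ y - 1`.
-/

open MeasureTheory

/-- Datasets (finite sets of records) are neighboring if one is obtained from
the other by adding or removing a single record. -/
def addRemoveNeighbor {X : Type*} [DecidableEq X] (d d' : Finset X) : Prop :=
  (∃ x ∉ d', d = insert x d') ∨ (∃ x ∉ d, d' = insert x d)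

/-- Poisson subsampling with rate `q`: each record of the dataset is included
independently with probability `q`; the distribution over subsamples `s ⊆ d`
assigns probability `q^|s| (1-q)^{|d|-|s|}`. -/
noncomputable def poissonSubsample {X : Type*} [DecidableEq X] [MeasurableSpace (Finset X)]
    (q : ℝ) (d : Finset X) : Measure (Finset X) :=
  ∑ s ∈ d.powerset,
    (ENNReal.ofReal (q ^ s.card * (1 - q) ^ (d.card - s.card))) • Measure.dirac s

open scoped ENNReal
open Finset

namespace ENNReal

lemma ofReal_one_sub_mul_add_ofReal_mul {q c : ℝ} (hq0 : 0 ≤ q) (hq1 : q ≤ 1) (hc : 0 ≤ c)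
    (a : ℝ≥0∞) :
    ENNReal.ofReal (1 - q) * a + ENNReal.ofReal q * (ENNReal.ofReal c * a) =
      ENNReal.ofReal (1 + q * (c - 1)) * a := by
  rw [← mul_assoc, ← ofReal_mul hq0, ← add_mul, ← ofReal_add (by linarith) (by positivity)]
  congr 2
  ring

lemma ofReal_inv_mul_le_of_le_ofReal_mul {a b : ℝ≥0∞} {c : ℝ} (hc : 0 < c)
    (h : a ≤ ENNReal.ofReal c * b) : ENNReal.ofReal c⁻¹ * a ≤ b := by
  calc ENNReal.ofReal c⁻¹ * a ≤ ENNReal.ofReal c⁻¹ * (ENNReal.ofReal c * b) := by gcongr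
    _ = b := by rw [← mul_assoc, ← ofReal_mul (by positivity), inv_mul_cancel₀ hc.ne', ofReal_one,
      one_mul]

end ENNReal

lemma one_add_mul_sub_one_pos {q c : ℝ} (hq0 : 0 ≤ q) (hq1 : q ≤ 1) (hc : 0 < c) :
    0 < 1 + q * (c - 1) := by
  rcases le_total 1 c with h | h
  · nlinarith
  · nlinarith [mul_nonneg (sub_nonneg.2 hq1) (sub_nonneg.2 h)]

lemma one_le_mul_one_add_mul_inv_sub_one {q c : ℝ} (hq0 : 0 ≤ q) (hq1 : q ≤ 1) (hc : 0 < c) :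
    1 ≤ (1 + q * (c - 1)) * (1 + q * (c⁻¹ - 1)) := by
  have h : (1 + q * (c - 1)) * (1 + q * (c⁻¹ - 1)) = 1 + q * (1 - q) * (c - 1) ^ 2 / c := by
    field_simp
    ring
  have : 0 ≤ q * (1 - q) * (c - 1) ^ 2 / c := by
    have := sub_nonneg.mpr hq1
    positivity
  linarith

section Mixture

variable {q c : ℝ} {a b : ℝ≥0∞}

lemma mixture_le_of_le_ofReal_mul (hq0 : 0 ≤ q) (hq1 : q ≤ 1) (hc : 0 ≤ c)
    (h : b ≤ ENNReal.ofReal c * a) :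
    ENNReal.ofReal (1 - q) * a + ENNReal.ofReal q * b ≤ ENNReal.ofReal (1 + q * (c - 1)) * a :=
  calc _ ≤ ENNReal.ofReal (1 - q) * a + ENNReal.ofReal q * (ENNReal.ofReal c * a) := by gcongr
    _ = _ := ENNReal.ofReal_one_sub_mul_add_ofReal_mul hq0 hq1 hc a

lemma le_mul_mixture_of_le_ofReal_mul (hq0 : 0 ≤ q) (hq1 : q ≤ 1) (hc : 0 < c)
    (h : a ≤ ENNReal.ofReal c * b) :
    a ≤ ENNReal.ofReal (1 + q * (c - 1)) * (ENNReal.ofReal (1 - q) * a + ENNReal.ofReal q * b) :=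
  calc a ≤ ENNReal.ofReal ((1 + q * (c - 1)) * (1 + q * (c⁻¹ - 1))) * a :=
        le_mul_of_one_le_left' (ENNReal.one_le_ofReal.mpr
          (one_le_mul_one_add_mul_inv_sub_one hq0 hq1 hc))
    _ = ENNReal.ofReal (1 + q * (c - 1)) *
          (ENNReal.ofReal (1 - q) * a + ENNReal.ofReal q * (ENNReal.ofReal c⁻¹ * a)) := by
        rw [ENNReal.ofReal_one_sub_mul_add_ofReal_mul hq0 hq1 (by positivity),
          ENNReal.ofReal_mul (one_add_mul_sub_one_pos hq0 hq1 hc).le, mul_assoc]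
    _ ≤ _ := by gcongr; exact ENNReal.ofReal_inv_mul_le_of_le_ofReal_mul hc h

end Mixture

section PoissonSubsample

variable {X Ω : Type*} [DecidableEq X] [MeasurableSpace (Finset X)] [MeasurableSpace Ω]
  {A : Finset X → Measure Ω} {q : ℝ} {s : Set Ω}

lemma poissonSubsample_bind_apply (hq0 : 0 ≤ q) (hq1 : q ≤ 1) (hA : Measurable A)
    (hs : MeasurableSet s) (d : Finset X) :
    (poissonSubsample q d).bind A s =
      ∑ t ∈ d.powerset, ENNReal.ofReal q ^ #t * ENNReal.ofReal (1 - q) ^ (#d - #t) * A t s := by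
  rw [poissonSubsample, Measure.bind_apply hs hA.aemeasurable, lintegral_finsetSum_measure]
  refine sum_congr rfl fun t _ => ?_
  rw [lintegral_smul_measure,
    lintegral_dirac' t (f := fun u => A u s) ((Measure.measurable_coe hs).comp hA), smul_eq_mul,
    ENNReal.ofReal_mul (by positivity), ENNReal.ofReal_pow hq0,
    ENNReal.ofReal_pow (sub_nonneg.mpr hq1)]

lemma poissonSubsample_insert_bind_apply (hq0 : 0 ≤ q) (hq1 : q ≤ 1) (hA : Measurable A)
    (hs : MeasurableSet s) {d : Finset X} {x : X} (hx : x ∉ d) :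
    (poissonSubsample q (insert x d)).bind A s =
      ∑ t ∈ d.powerset, ENNReal.ofReal q ^ #t * ENNReal.ofReal (1 - q) ^ (#d - #t) *
        (ENNReal.ofReal (1 - q) * A t s + ENNReal.ofReal q * A (insert x t) s) := by
  rw [poissonSubsample_bind_apply hq0 hq1 hA hs, sum_powerset_insert hx, ← sum_add_distrib]
  refine sum_congr rfl fun t ht => ?_
  have htd : t ⊆ d := mem_powerset.mp ht
  rw [card_insert_of_notMem hx, card_insert_of_notMem fun hxt => hx (htd hxt),
    show #d + 1 - #t = #d - #t + 1 by have := card_le_card htd; omega,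
    show #d + 1 - (#t + 1) = #d - #t by omega]
  ring

end PoissonSubsample

theorem DP.bind_poissonSubsample {X Ω : Type*} [DecidableEq X] [MeasurableSpace (Finset X)]
    [MeasurableSpace Ω] {A : Finset X → Measure Ω} {ε q : ℝ} (hq0 : 0 ≤ q) (hq1 : q ≤ 1)
    (hmeas : Measurable A) (hA : DP addRemoveNeighbor A ε 0) :
    DP addRemoveNeighbor (fun d => (poissonSubsample q d).bind A)
      (Real.log (1 + q * (Real.exp ε - 1))) 0 := by
  intro d d' hdd' s hs
  have hAs (t t' : Finset X) (h : addRemoveNeighbor t t') :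
      A t s ≤ ENNReal.ofReal (Real.exp ε) * A t' s := by
    simpa using hA t t' h s hs
  rw [Real.exp_log (one_add_mul_sub_one_pos hq0 hq1 (Real.exp_pos ε)), ENNReal.ofReal_zero,
    add_zero]
  rcases hdd' with ⟨x, hx, rfl⟩ | ⟨x, hx, rfl⟩ <;>
    rw [poissonSubsample_insert_bind_apply hq0 hq1 hmeas hs hx,
      poissonSubsample_bind_apply hq0 hq1 hmeas hs, mul_sum] <;>
    refine sum_le_sum fun t ht => ?_ <;>
    have hxt : x ∉ t := fun h => hx (mem_powerset.mp ht h) <;>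
    rw [mul_left_comm] <;>
    gcongr
  · exact mixture_le_of_le_ofReal_mul hq0 hq1 (Real.exp_pos ε).le
      (hAs _ _ (Or.inl ⟨x, hxt, rfl⟩))
  · exact le_mul_mixture_of_le_ofReal_mul hq0 hq1 (Real.exp_pos ε)
      (hAs _ _ (Or.inr ⟨x, hxt, rfl⟩))

namespace Real

lemma exp_sub_one_le_mul_exp (x : ℝ) : exp x - 1 ≤ x * exp x := by
  have := mul_le_mul_of_nonneg_left (one_sub_le_exp_neg x) (exp_pos x).le
  rw [← exp_add, add_neg_cancel, exp_zero] at this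
  linarith

lemma exp_sub_one_le_two_mul {x : ℝ} (hx0 : 0 ≤ x) (hx1 : x ≤ 1) : exp x - 1 ≤ 2 * x := by
  have := abs_exp_sub_one_le (x := x) (by rwa [abs_of_nonneg hx0])
  rw [abs_of_nonneg hx0] at this
  exact (le_abs_self _).trans this

end Real

theorem dp_subsampling_amplification_general {X Ω : Type*} [DecidableEq X]
    [MeasurableSpace (Finset X)] [MeasurableSpace Ω]
    (A : Finset X → Measure Ω) (ε q : ℝ)
    (hε : 0 ≤ ε) (hq : q ∈ Set.Ioc (0 : ℝ) 1)
    (hmeas : Measurable A)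
    (hA : DP addRemoveNeighbor A ε 0) :
    DP addRemoveNeighbor (fun d => (poissonSubsample q d).bind A)
        (Real.log (1 + q * (Real.exp ε - 1))) 0 ∧
      Real.log (1 + q * (Real.exp ε - 1)) ≤ q * ε * Real.exp ε ∧
      (ε ≤ 1 → Real.log (1 + q * (Real.exp ε - 1)) ≤ 2 * q * ε) := by
  obtain ⟨hq0, hq1⟩ := hq
  have hlog : Real.log (1 + q * (Real.exp ε - 1)) ≤ q * (Real.exp ε - 1) := by
    have := Real.log_le_sub_one_of_pos (one_add_mul_sub_one_pos hq0.le hq1 (Real.exp_pos ε))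
    linarith
  refine ⟨DP.bind_poissonSubsample hq0.le hq1 hmeas hA, ?_, fun hε1 => ?_⟩
  · linarith [mul_le_mul_of_nonneg_left (Real.exp_sub_one_le_mul_exp ε) hq0.le]
  · linarith [mul_le_mul_of_nonneg_left (Real.exp_sub_one_le_two_mul hε hε1) hq0.le]

/-- Privacy amplification by subsampling: if `A` is `(ε, 0)`-DP (w.r.t.
add/remove-one neighboring) then running `A` on a Poisson subsample with rate
`q` is `(log(1 + q(e^ε - 1)), 0)`-DP; moreover
`log(1 + q(e^ε - 1)) ≤ q ε e^ε` and, if `ε ≤ 1`,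
`log(1 + q(e^ε - 1)) ≤ 2 q ε`. -/
theorem dp_subsampling_amplification {X Ω : Type*} [DecidableEq X]
    [MeasurableSpace (Finset X)] [MeasurableSpace Ω]
    (A : Finset X → Measure Ω) (ε q : ℝ)
    (hε : 0 ≤ ε) (hq : q ∈ Set.Ioc (0 : ℝ) 1)
    (hmeas : Measurable A)
    (hprob : ∀ d, IsProbabilityMeasure (A d))
    (hA : DP addRemoveNeighbor A ε 0) :
    DP addRemoveNeighbor (fun d => (poissonSubsample q d).bind A)
        (Real.log (1 + q * (Real.exp ε - 1))) 0 ∧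
      Real.log (1 + q * (Real.exp ε - 1)) ≤ q * ε * Real.exp ε ∧
      (ε ≤ 1 → Real.log (1 + q * (Real.exp ε - 1)) ≤ 2 * q * ε) :=
  dp_subsampling_amplification_general A ε q hε hq hmeas hA
end
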